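/- arXiv:1607.06326 — 2 statements merged into one kernel-verified Lean document; each statement's English description precedes it below -/
import Mathlib

section
/- For every integer n ≥ 2 and all smooth compactly supported functions u, φ, φ' : ℝⁿ → ℝ, the Wess–Zumino consistency condition s A = 0 holds for the anomaly: the derivative at s = 0 of s ↦ A(φ, u + sφ') equals the derivative at s = 0 of s ↦ A(φ', u + sφ); that is, the bilinear form (φ,φ') ↦ (d/ds)|_{s=0} A(φ, u+sφ') is symmetric. -/
open MeasureTheory Real

noncomputable section

/-- Coordinate partial derivative `∂ᵢ f x` on `ℝⁿ = EuclideanSpace ℝ (Fin n)`. -/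
def pd (n : ℕ) (f : EuclideanSpace ℝ (Fin n) → ℝ) (i : Fin n)
    (x : EuclideanSpace ℝ (Fin n)) : ℝ :=
  fderiv ℝ f x (EuclideanSpace.single i 1)

/-- Second coordinate partial derivative `∂ᵢ∂ᵢ f x`. -/
def pd2 (n : ℕ) (f : EuclideanSpace ℝ (Fin n) → ℝ) (i : Fin n)
    (x : EuclideanSpace ℝ (Fin n)) : ℝ :=
  pd n (pd n f i) i x

/-- Scalar curvature expression of the conformally flat metric `g_v = e^{2v} δ`:
`R(v) = e^{−2v} ( −2(n−1) Σᵢ ∂ᵢ∂ᵢ v − (n−1)(n−2) Σᵢ (∂ᵢ v)² )`. -/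
def Rscal (n : ℕ) (v : EuclideanSpace ℝ (Fin n) → ℝ)
    (x : EuclideanSpace ℝ (Fin n)) : ℝ :=
  Real.exp (-2 * v x) *
    (-2 * ((n : ℝ) - 1) * ∑ i, pd2 n v i x
      - ((n : ℝ) - 1) * ((n : ℝ) - 2) * ∑ i, (pd n v i x) ^ 2)

/-- Laplacian of `g_v` acting on `f`:
`Δ_v f = −e^{−2v} ( Σᵢ ∂ᵢ∂ᵢ f + (n−2) Σᵢ ∂ᵢ v ∂ᵢ f )`. -/
def lap (n : ℕ) (v f : EuclideanSpace ℝ (Fin n) → ℝ)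
    (x : EuclideanSpace ℝ (Fin n)) : ℝ :=
  -Real.exp (-2 * v x) *
    (∑ i, pd2 n f i x + ((n : ℝ) - 2) * ∑ i, pd n v i x * pd n f i x)

/-- Gradient square `|∇f|²_v = e^{−2v} Σᵢ (∂ᵢ f)²`. -/
def gradSq (n : ℕ) (v f : EuclideanSpace ℝ (Fin n) → ℝ)
    (x : EuclideanSpace ℝ (Fin n)) : ℝ :=
  Real.exp (-2 * v x) * ∑ i, (pd n f i x) ^ 2

/-- Einstein–Hilbert action `S(u) = ∫ e^{nu} R(u) dx`. -/
def SEH (n : ℕ) (u : EuclideanSpace ℝ (Fin n) → ℝ) : ℝ :=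
  ∫ x, Real.exp ((n : ℝ) * u x) * Rscal n u x

/-- Anomaly functional
`A(φ,u) = ∫ e^{nu} ( (n−2) φ R(u) + 2(n−1) Δ_u φ ) dx`. -/
def anomaly (n : ℕ) (φ u : EuclideanSpace ℝ (Fin n) → ℝ) : ℝ :=
  ∫ x, Real.exp ((n : ℝ) * u x) *
    (((n : ℝ) - 2) * φ x * Rscal n u x + 2 * ((n : ℝ) - 1) * lap n u φ x)

/-- Wess–Zumino functional `Γ_WZ(τ,u) = ∫₀¹ A(−2τ, u − tτ) dt`. -/
def WZ (n : ℕ) (τ u : EuclideanSpace ℝ (Fin n) → ℝ) : ℝ :=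
  ∫ t in (0 : ℝ)..1,
    anomaly n (fun y => -2 * τ y) (fun y => u y - t * τ y)

/-! ### Auxiliary lemmas -/

lemma pd_contDiff {n : ℕ} {f : EuclideanSpace ℝ (Fin n) → ℝ} (hf : ContDiff ℝ (⊤ : ℕ∞) f) (i : Fin n) :
    ContDiff ℝ (⊤ : ℕ∞) (pd n f i) :=
  (hf.fderiv_right (by simp)).clm_apply contDiff_const

lemma pd_add_smul {n : ℕ} {f g : EuclideanSpace ℝ (Fin n) → ℝ}
    (hf : Differentiable ℝ f) (hg : Differentiable ℝ g) (s : ℝ) (i : Fin n)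
    (x : EuclideanSpace ℝ (Fin n)) :
    pd n (fun y => f y + s * g y) i x = pd n f i x + s * pd n g i x := by
  have h : HasFDerivAt (fun y => f y + s * g y) (fderiv ℝ f x + s • fderiv ℝ g x) x := by
    exact (hf x).hasFDerivAt.add ((hg x).hasFDerivAt.const_mul s)
  simp [pd, h.fderiv]

lemma pd_eq_zero {n : ℕ} {f : EuclideanSpace ℝ (Fin n) → ℝ} {x : EuclideanSpace ℝ (Fin n)}
    (hx : x ∉ tsupport f) (i : Fin n) : pd n f i x = 0 := by
  have : fderiv ℝ f x = 0 := by
    by_contra h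
    exact hx (support_fderiv_subset ℝ (by simpa [Function.mem_support] using h))
  simp [pd, this]

lemma tsupport_pd_subset {n : ℕ} (f : EuclideanSpace ℝ (Fin n) → ℝ) (i : Fin n) :
    tsupport (pd n f i) ⊆ tsupport f := by
  apply closure_minimal _ isClosed_closure
  intro x hx
  apply support_fderiv_subset ℝ (f := f)
  simp only [Function.mem_support] at hx ⊢
  intro h; exact hx (by simp [pd, h])

lemma pd2_add_smul {n : ℕ} {f g : EuclideanSpace ℝ (Fin n) → ℝ}
    (hf : ContDiff ℝ (⊤ : ℕ∞) f) (hg : ContDiff ℝ (⊤ : ℕ∞) g) (s : ℝ) (i : Fin n)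
    (x : EuclideanSpace ℝ (Fin n)) :
    pd2 n (fun y => f y + s * g y) i x = pd2 n f i x + s * pd2 n g i x := by
  unfold pd2
  have h1 : pd n (fun y => f y + s * g y) i = fun z => pd n f i z + s * pd n g i z :=
    funext fun z => pd_add_smul (hf.differentiable (by simp)) (hg.differentiable (by simp)) s i z
  rw [h1]
  exact pd_add_smul ((pd_contDiff hf i).differentiable (by simp))
    ((pd_contDiff hg i).differentiable (by simp)) s i x

lemma pd2_eq_zero {n : ℕ} {f : EuclideanSpace ℝ (Fin n) → ℝ} {x : EuclideanSpace ℝ (Fin n)}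
    (hx : x ∉ tsupport f) (i : Fin n) : pd2 n f i x = 0 :=
  pd_eq_zero (fun h => hx (tsupport_pd_subset f i h)) i

lemma pd2_contDiff {n : ℕ} {f : EuclideanSpace ℝ (Fin n) → ℝ} (hf : ContDiff ℝ (⊤ : ℕ∞) f) (i : Fin n) :
    ContDiff ℝ (⊤ : ℕ∞) (pd2 n f i) :=
  pd_contDiff (pd_contDiff hf i) i

/-- Sum of second partial derivatives. -/
def SU (n : ℕ) (f : EuclideanSpace ℝ (Fin n) → ℝ) (x : EuclideanSpace ℝ (Fin n)) : ℝ :=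
  ∑ i, pd2 n f i x

/-- Sum of squares of first partial derivatives. -/
def SQ (n : ℕ) (f : EuclideanSpace ℝ (Fin n) → ℝ) (x : EuclideanSpace ℝ (Fin n)) : ℝ :=
  ∑ i, (pd n f i x) ^ 2

/-- Dot product of gradients. -/
def SG (n : ℕ) (f g : EuclideanSpace ℝ (Fin n) → ℝ) (x : EuclideanSpace ℝ (Fin n)) : ℝ :=
  ∑ i, pd n f i x * pd n g i x

/-- Zeroth Taylor coefficient of the anomaly integrand. -/
def A0 (n : ℕ) (u φ : EuclideanSpace ℝ (Fin n) → ℝ) (x : EuclideanSpace ℝ (Fin n)) : ℝ :=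
  Real.exp (((n : ℝ) - 2) * u x) *
    (((n : ℝ) - 2) * φ x *
        (-2 * ((n : ℝ) - 1) * SU n u x - ((n : ℝ) - 1) * ((n : ℝ) - 2) * SQ n u x)
      - 2 * ((n : ℝ) - 1) * SU n φ x - 2 * ((n : ℝ) - 1) * ((n : ℝ) - 2) * SG n u φ x)

/-- First Taylor coefficient of the anomaly integrand. -/
def A1 (n : ℕ) (u φ φ' : EuclideanSpace ℝ (Fin n) → ℝ) (x : EuclideanSpace ℝ (Fin n)) : ℝ :=
  Real.exp (((n : ℝ) - 2) * u x) *
    (((n : ℝ) - 2) * φ x *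
        (-2 * ((n : ℝ) - 1) * SU n φ' x - 2 * ((n : ℝ) - 1) * ((n : ℝ) - 2) * SG n u φ' x)
      - 2 * ((n : ℝ) - 1) * ((n : ℝ) - 2) * SG n φ' φ x)

/-- Second Taylor coefficient of the anomaly integrand. -/
def A2 (n : ℕ) (u φ φ' : EuclideanSpace ℝ (Fin n) → ℝ) (x : EuclideanSpace ℝ (Fin n)) : ℝ :=
  Real.exp (((n : ℝ) - 2) * u x) *
    (((n : ℝ) - 2) * φ x * (-((n : ℝ) - 1) * ((n : ℝ) - 2) * SQ n φ' x))

lemma integrand_eq (n : ℕ) (u φ φ' : EuclideanSpace ℝ (Fin n) → ℝ)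
    (hu : ContDiff ℝ (⊤ : ℕ∞) u) (hφ' : ContDiff ℝ (⊤ : ℕ∞) φ') (s : ℝ) (x : EuclideanSpace ℝ (Fin n)) :
    Real.exp ((n : ℝ) * (u x + s * φ' x)) *
      (((n : ℝ) - 2) * φ x * Rscal n (fun y => u y + s * φ' y) x
        + 2 * ((n : ℝ) - 1) * lap n (fun y => u y + s * φ' y) φ x)
    = Real.exp ((((n : ℝ) - 2) * φ' x) * s) *
        (A0 n u φ x + A1 n u φ φ' x * s + A2 n u φ φ' x * s ^ 2) := by
  have hud := hu.differentiable (by simp)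
  have hφ'd := hφ'.differentiable (by simp)
  simp only [Rscal, lap, pd_add_smul hud hφ'd s, pd2_add_smul hu hφ' s]
  have e3 : ∑ i, (pd2 n u i x + s * pd2 n φ' i x) = SU n u x + s * SU n φ' x := by
    rw [Finset.sum_add_distrib, ← Finset.mul_sum]; rfl
  have e1 : ∑ i, (pd n u i x + s * pd n φ' i x) ^ 2
      = SQ n u x + s * (2 * SG n u φ' x) + s ^ 2 * SQ n φ' x := by
    have h : ∀ i : Fin n, (pd n u i x + s * pd n φ' i x) ^ 2
        = (pd n u i x) ^ 2 + s * (2 * (pd n u i x * pd n φ' i x))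
          + s ^ 2 * (pd n φ' i x) ^ 2 := fun i => by ring
    simp_rw [h, Finset.sum_add_distrib, ← Finset.mul_sum]
    rfl
  have e2 : ∑ i, (pd n u i x + s * pd n φ' i x) * pd n φ i x
      = SG n u φ x + s * SG n φ' φ x := by
    have h : ∀ i : Fin n, (pd n u i x + s * pd n φ' i x) * pd n φ i x
        = pd n u i x * pd n φ i x + s * (pd n φ' i x * pd n φ i x) := fun i => by ring
    simp_rw [h, Finset.sum_add_distrib, ← Finset.mul_sum]
    rfl
  rw [e1, e2, e3]
  have hR : Real.exp ((n : ℝ) * (u x + s * φ' x)) * Real.exp (-2 * (u x + s * φ' x))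
      = Real.exp (((n : ℝ) - 2) * u x) * Real.exp ((((n : ℝ) - 2) * φ' x) * s) := by
    rw [← Real.exp_add, ← Real.exp_add]; congr 1; ring
  rw [show (∑ i, pd2 n φ i x) = SU n φ x from rfl]
  simp only [A0, A1, A2]
  linear_combination
    (((n : ℝ) - 2) * φ x *
        (-2 * ((n : ℝ) - 1) * (SU n u x + s * SU n φ' x)
          - ((n : ℝ) - 1) * ((n : ℝ) - 2) *
            (SQ n u x + s * (2 * SG n u φ' x) + s ^ 2 * SQ n φ' x))
      - 2 * ((n : ℝ) - 1) *
        (SU n φ x + ((n : ℝ) - 2) * (SG n u φ x + s * SG n φ' φ x))) * hR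

lemma SU_zero {n : ℕ} {φ : EuclideanSpace ℝ (Fin n) → ℝ} {x : EuclideanSpace ℝ (Fin n)}
    (hx : x ∉ tsupport φ) : SU n φ x = 0 :=
  Finset.sum_eq_zero fun i _ => pd2_eq_zero hx i

lemma A0_zero {n : ℕ} {u φ : EuclideanSpace ℝ (Fin n) → ℝ} {x : EuclideanSpace ℝ (Fin n)}
    (hx : x ∉ tsupport φ) : A0 n u φ x = 0 := by
  have h1 : φ x = 0 := image_eq_zero_of_notMem_tsupport hx
  have h3 : SG n u φ x = 0 := Finset.sum_eq_zero fun i _ => by rw [pd_eq_zero hx i, mul_zero]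
  simp [A0, h1, SU_zero hx, h3]

lemma A1_zero {n : ℕ} {u φ φ' : EuclideanSpace ℝ (Fin n) → ℝ} {x : EuclideanSpace ℝ (Fin n)}
    (hx : x ∉ tsupport φ) : A1 n u φ φ' x = 0 := by
  have h1 : φ x = 0 := image_eq_zero_of_notMem_tsupport hx
  have h3 : SG n φ' φ x = 0 := Finset.sum_eq_zero fun i _ => by rw [pd_eq_zero hx i, mul_zero]
  simp [A1, h1, h3]

lemma A2_zero {n : ℕ} {u φ φ' : EuclideanSpace ℝ (Fin n) → ℝ} {x : EuclideanSpace ℝ (Fin n)}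
    (hx : x ∉ tsupport φ) : A2 n u φ φ' x = 0 := by
  have h1 : φ x = 0 := image_eq_zero_of_notMem_tsupport hx
  simp [A2, h1]

lemma SU_cont {n : ℕ} {f : EuclideanSpace ℝ (Fin n) → ℝ} (hf : ContDiff ℝ (⊤ : ℕ∞) f) :
    Continuous (SU n f) :=
  continuous_finset_sum _ fun i _ => (pd2_contDiff hf i).continuous

lemma SQ_cont {n : ℕ} {f : EuclideanSpace ℝ (Fin n) → ℝ} (hf : ContDiff ℝ (⊤ : ℕ∞) f) :
    Continuous (SQ n f) :=
  continuous_finset_sum _ fun i _ => ((pd_contDiff hf i).continuous).pow 2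

lemma SG_cont {n : ℕ} {f g : EuclideanSpace ℝ (Fin n) → ℝ}
    (hf : ContDiff ℝ (⊤ : ℕ∞) f) (hg : ContDiff ℝ (⊤ : ℕ∞) g) : Continuous (SG n f g) :=
  continuous_finset_sum _ fun i _ =>
    ((pd_contDiff hf i).continuous).mul ((pd_contDiff hg i).continuous)

lemma A0_cont {n : ℕ} {u φ : EuclideanSpace ℝ (Fin n) → ℝ}
    (hu : ContDiff ℝ (⊤ : ℕ∞) u) (hφ : ContDiff ℝ (⊤ : ℕ∞) φ) : Continuous (A0 n u φ) := by
  unfold A0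
  have h1 := hu.continuous; have h2 := hφ.continuous
  have h3 := SU_cont hu; have h4 := SQ_cont hu; have h5 := SU_cont hφ
  have h6 := SG_cont hu hφ
  fun_prop

lemma A1_cont {n : ℕ} {u φ φ' : EuclideanSpace ℝ (Fin n) → ℝ}
    (hu : ContDiff ℝ (⊤ : ℕ∞) u) (hφ : ContDiff ℝ (⊤ : ℕ∞) φ) (hφ' : ContDiff ℝ (⊤ : ℕ∞) φ') :
    Continuous (A1 n u φ φ') := by
  unfold A1
  have h1 := hu.continuous; have h2 := hφ.continuous
  have h3 := SU_cont hφ'; have h4 := SG_cont hu hφ'; have h5 := SG_cont hφ' hφ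
  fun_prop

lemma A2_cont {n : ℕ} {u φ φ' : EuclideanSpace ℝ (Fin n) → ℝ}
    (hu : ContDiff ℝ (⊤ : ℕ∞) u) (hφ : ContDiff ℝ (⊤ : ℕ∞) φ) (hφ' : ContDiff ℝ (⊤ : ℕ∞) φ') :
    Continuous (A2 n u φ φ') := by
  unfold A2
  have h1 := hu.continuous; have h2 := hφ.continuous; have h3 := SQ_cont hφ'
  fun_prop

lemma key (n : ℕ) (u φ φ' : EuclideanSpace ℝ (Fin n) → ℝ)
    (hu : ContDiff ℝ (⊤ : ℕ∞) u) (hφ : ContDiff ℝ (⊤ : ℕ∞) φ) (hφ' : ContDiff ℝ (⊤ : ℕ∞) φ')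
    (hcφ : HasCompactSupport φ) :
    HasDerivAt (fun s : ℝ => anomaly n φ (fun y => u y + s * φ' y))
      (∫ x, ((n : ℝ) - 2) * φ' x * A0 n u φ x + A1 n u φ φ' x) 0 := by
  classical
  set cc : EuclideanSpace ℝ (Fin n) → ℝ := fun x => ((n : ℝ) - 2) * φ' x with hcc
  set F : ℝ → EuclideanSpace ℝ (Fin n) → ℝ := fun s x =>
    Real.exp (cc x * s) * (A0 n u φ x + A1 n u φ φ' x * s + A2 n u φ φ' x * s ^ 2) with hF
  set F' : ℝ → EuclideanSpace ℝ (Fin n) → ℝ := fun s x =>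
    Real.exp (cc x * s) *
      (cc x * (A0 n u φ x + A1 n u φ φ' x * s + A2 n u φ φ' x * s ^ 2)
        + (A1 n u φ φ' x + 2 * A2 n u φ φ' x * s)) with hF'
  have hccc : Continuous cc := continuous_const.mul hφ'.continuous
  have hA0c := A0_cont hu hφ
  have hA1c := A1_cont hu hφ hφ'
  have hA2c := A2_cont hu hφ hφ'
  have hfun : (fun s : ℝ => anomaly n φ (fun y => u y + s * φ' y)) = fun s : ℝ => ∫ x, F s x := by
    funext s
    unfold anomaly
    exact integral_congr_ae (Filter.Eventually.of_forall fun x =>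
      integrand_eq n u φ φ' hu hφ' s x)
  rw [hfun]
  set B : EuclideanSpace ℝ (Fin n) → ℝ := fun x =>
    Real.exp |cc x| *
      (|cc x| * (|A0 n u φ x| + |A1 n u φ φ' x| + |A2 n u φ φ' x|)
        + (|A1 n u φ φ' x| + 2 * |A2 n u φ φ' x|)) with hB
  have hFcont : ∀ s : ℝ, Continuous (F s) := fun s => by
    apply Continuous.mul
    · exact (hccc.mul continuous_const).rexp
    · exact (hA0c.add (hA1c.mul continuous_const)).add (hA2c.mul continuous_const)
  have hF'cont : ∀ s : ℝ, Continuous (F' s) := fun s => by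
    apply Continuous.mul
    · exact (hccc.mul continuous_const).rexp
    · exact (hccc.mul ((hA0c.add (hA1c.mul continuous_const)).add
        (hA2c.mul continuous_const))).add (hA1c.add ((continuous_const.mul hA2c).mul continuous_const))
  have hBcont : Continuous B := by
    apply ((hccc.abs).rexp).mul
    exact (hccc.abs.mul ((hA0c.abs.add hA1c.abs).add hA2c.abs)).add
      (hA1c.abs.add (continuous_const.mul hA2c.abs))
  have hBsupp : HasCompactSupport B := by
    apply HasCompactSupport.intro hcφ
    intro x hx
    simp [hB, A0_zero hx, A1_zero hx, A2_zero hx]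
  have hF0supp : HasCompactSupport (F 0) := by
    apply HasCompactSupport.intro hcφ
    intro x hx
    simp [hF, A0_zero hx, A1_zero hx, A2_zero hx]
  have H := hasDerivAt_integral_of_dominated_loc_of_deriv_le (μ := volume) (x₀ := (0 : ℝ))
      (F := F) (F' := F') (bound := B) (Metric.ball_mem_nhds 0 one_pos)
      (Filter.Eventually.of_forall fun s => (hFcont s).aestronglyMeasurable)
      ((hFcont 0).integrable_of_hasCompactSupport hF0supp)
      ((hF'cont 0).aestronglyMeasurable)
      ?_ (hBcont.integrable_of_hasCompactSupport hBsupp) ?_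
  · have heq : ∫ x, F' 0 x = ∫ x, ((n : ℝ) - 2) * φ' x * A0 n u φ x + A1 n u φ φ' x := by
      apply integral_congr_ae
      apply Filter.Eventually.of_forall
      intro x
      simp only [hF', mul_zero, Real.exp_zero, one_mul, add_zero]
      ring
    exact heq ▸ H.2
  · -- bound
    apply Filter.Eventually.of_forall
    intro x s hs
    have hs1 : |s| ≤ 1 := le_of_lt (by simpa [Real.dist_eq] using hs)
    set a0 := A0 n u φ x
    set a1 := A1 n u φ φ' x
    set a2 := A2 n u φ φ' x
    have h1 : Real.exp (cc x * s) ≤ Real.exp |cc x| := by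
      apply Real.exp_le_exp.2
      calc cc x * s ≤ |cc x * s| := le_abs_self _
        _ = |cc x| * |s| := abs_mul _ _
        _ ≤ |cc x| * 1 := mul_le_mul_of_nonneg_left hs1 (abs_nonneg _)
        _ = |cc x| := mul_one _
    have hP : |a0 + a1 * s + a2 * s ^ 2| ≤ |a0| + |a1| + |a2| := by
      calc |a0 + a1 * s + a2 * s ^ 2| ≤ |a0 + a1 * s| + |a2 * s ^ 2| := abs_add_le _ _
        _ ≤ |a0| + |a1 * s| + |a2 * s ^ 2| := add_le_add_left (abs_add_le _ _) _
        _ ≤ |a0| + |a1| + |a2| := by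
            rw [abs_mul, abs_mul, abs_pow]
            have h2s : |s| ^ 2 ≤ 1 := by nlinarith [abs_nonneg s]
            have e1 : |a1| * |s| ≤ |a1| * 1 := mul_le_mul_of_nonneg_left hs1 (abs_nonneg _)
            have e2 : |a2| * |s| ^ 2 ≤ |a2| * 1 := mul_le_mul_of_nonneg_left h2s (abs_nonneg _)
            linarith
    have hQ : |a1 + 2 * a2 * s| ≤ |a1| + 2 * |a2| := by
      calc |a1 + 2 * a2 * s| ≤ |a1| + |2 * a2 * s| := abs_add_le _ _
        _ ≤ |a1| + 2 * |a2| := by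
            rw [abs_mul, abs_mul, abs_two]
            have e1 : 2 * |a2| * |s| ≤ 2 * |a2| * 1 :=
              mul_le_mul_of_nonneg_left hs1 (by positivity)
            linarith
    calc ‖F' s x‖ = Real.exp (cc x * s) * |cc x * (a0 + a1 * s + a2 * s ^ 2) + (a1 + 2 * a2 * s)| := by
          rw [Real.norm_eq_abs, hF']; rw [abs_mul, Real.abs_exp]
      _ ≤ Real.exp |cc x| * (|cc x| * (|a0| + |a1| + |a2|) + (|a1| + 2 * |a2|)) := by
          apply mul_le_mul h1 ?_ (abs_nonneg _) (Real.exp_pos _).le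
          calc |cc x * (a0 + a1 * s + a2 * s ^ 2) + (a1 + 2 * a2 * s)|
              ≤ |cc x * (a0 + a1 * s + a2 * s ^ 2)| + |a1 + 2 * a2 * s| := abs_add_le _ _
            _ = |cc x| * |a0 + a1 * s + a2 * s ^ 2| + |a1 + 2 * a2 * s| := by rw [abs_mul]
            _ ≤ |cc x| * (|a0| + |a1| + |a2|) + (|a1| + 2 * |a2|) :=
                add_le_add (mul_le_mul_of_nonneg_left hP (abs_nonneg _)) hQ
      _ = B x := rfl
  · -- differentiability
    apply Filter.Eventually.of_forall
    intro x s _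
    have h1 : HasDerivAt (fun s : ℝ => cc x * s) (cc x) s := by
      simpa using (hasDerivAt_id s).const_mul (cc x)
    have h2 := h1.exp
    have hb : HasDerivAt (fun s : ℝ => A1 n u φ φ' x * s) (A1 n u φ φ' x) s := by
      simpa using (hasDerivAt_id s).const_mul (A1 n u φ φ' x)
    have hc : HasDerivAt (fun s : ℝ => A2 n u φ φ' x * s ^ 2) (A2 n u φ φ' x * (2 * s)) s := by
      simpa using (hasDerivAt_pow 2 s).const_mul (A2 n u φ φ' x)
    have h3 : HasDerivAt
        (fun s : ℝ => A0 n u φ x + A1 n u φ φ' x * s + A2 n u φ φ' x * s ^ 2)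
        (A1 n u φ φ' x + 2 * A2 n u φ φ' x * s) s := by
      exact (((hasDerivAt_const s (A0 n u φ x)).add hb).add hc).congr_deriv (by ring)
    exact (h2.mul h3).congr_deriv (by simp only [hF']; ring)

/-- Wess–Zumino consistency condition `s A = 0`: the variation of the anomaly
in the background is a symmetric bilinear form in the ghosts. -/
theorem wess_zumino_consistency_of_anomaly
    (n : ℕ) (hn : 2 ≤ n)
    (u φ φ' : EuclideanSpace ℝ (Fin n) → ℝ)
    (hu : ContDiff ℝ (⊤ : ℕ∞) u) (hφ : ContDiff ℝ (⊤ : ℕ∞) φ) (hφ' : ContDiff ℝ (⊤ : ℕ∞) φ')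
    (hcu : HasCompactSupport u) (hcφ : HasCompactSupport φ)
    (hcφ' : HasCompactSupport φ') :
    ∃ d : ℝ,
      HasDerivAt (fun s : ℝ => anomaly n φ (fun y => u y + s * φ' y)) d 0 ∧
      HasDerivAt (fun s : ℝ => anomaly n φ' (fun y => u y + s * φ y)) d 0 := by
  refine ⟨∫ x, ((n : ℝ) - 2) * φ' x * A0 n u φ x + A1 n u φ φ' x,
    key n u φ φ' hu hφ hφ' hcφ, ?_⟩
  have h := key n u φ' φ hu hφ' hφ hcφ'
  have heq : ∫ x, ((n : ℝ) - 2) * φ x * A0 n u φ' x + A1 n u φ' φ x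
      = ∫ x, ((n : ℝ) - 2) * φ' x * A0 n u φ x + A1 n u φ φ' x := by
    apply integral_congr_ae
    apply Filter.Eventually.of_forall
    intro x
    have hsg : SG n φ φ' x = SG n φ' φ x := Finset.sum_congr rfl fun i _ => mul_comm _ _
    simp only [A0, A1]
    rw [hsg]
    ring
  exact heq ▸ h
end
end

section
/- (Independence of the interpolating family.) Let E be a real Banach space and ω : E → (E →L[ℝ] ℝ) a continuously differentiable closed 1-form (Dω(x) symmetric for every x). Let H : ℝ × ℝ → E be twice continuously differentiable with both endpoints fixed: H(s,0) = x₀ and H(s,1) = x₁ for all s. Then the function F(s) := ∫₀¹ ω(H(s,t))( ∂H/∂t (s,t) ) dt is constant in s; i.e. the integral of a closed 1-form along an interpolating path from x₀ to x₁ is unchanged under smooth deformations of the path with fixed ends. -/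
open MeasureTheory

/-! The pullback `H^*ω` is a closed 1-form on the `(s, t)`-plane: its exterior derivative involves
`Dω` and `D²H`, both symmetric. Differentiating under the integral sign and using closedness,
`F'(s) = ∫₀¹ ∂ₛ (H^*ω)(∂ₜ) dt = ∫₀¹ ∂ₜ (H^*ω)(∂ₛ) dt = (H^*ω)(∂ₛ)(s, 1) - (H^*ω)(∂ₛ)(s, 0)`,
which vanishes because `∂ₛH = 0` along the fixed ends. -/

/-- Where `α` is not differentiable, `fderiv` is `0` and the condition holds trivially. -/
def IsClosedOneForm {E G : Type*} [NormedAddCommGroup E] [NormedSpace ℝ E]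
    [NormedAddCommGroup G] [NormedSpace ℝ G] (α : E → E →L[ℝ] G) : Prop :=
  ∀ x v w : E, fderiv ℝ α x v w = fderiv ℝ α x w v

section Pullback

variable {E F G : Type*} [NormedAddCommGroup E] [NormedSpace ℝ E] [NormedAddCommGroup F]
  [NormedSpace ℝ F] [NormedAddCommGroup G] [NormedSpace ℝ G]

noncomputable def pullbackOneForm (ω : E → E →L[ℝ] G) (H : F → E) : F → F →L[ℝ] G :=
  fun q => (ω (H q)).comp (fderiv ℝ H q)

theorem ContDiff.pullbackOneForm {ω : E → E →L[ℝ] G} {H : F → E} (hω : ContDiff ℝ 1 ω)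
    (hH : ContDiff ℝ 2 H) : ContDiff ℝ 1 (pullbackOneForm ω H) :=
  (hω.comp (hH.of_le one_le_two)).clm_comp (hH.fderiv_right le_rfl)

theorem fderiv_pullbackOneForm_apply {ω : E → E →L[ℝ] G} {H : F → E} {p : F}
    (hω : DifferentiableAt ℝ ω (H p)) (hH : DifferentiableAt ℝ H p)
    (hH' : DifferentiableAt ℝ (fderiv ℝ H) p) (v w : F) :
    fderiv ℝ (pullbackOneForm ω H) p v w
      = fderiv ℝ ω (H p) (fderiv ℝ H p v) (fderiv ℝ H p w)
        + ω (H p) (fderiv ℝ (fderiv ℝ H) p v w) := by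
  unfold pullbackOneForm
  rw [fderiv_clm_comp (c := fun q => ω (H q)) (hω.comp p hH) hH', fderiv_fun_comp p hω hH]
  simp only [add_apply, ContinuousLinearMap.coe_comp, Function.comp_apply,
    ContinuousLinearMap.compL_apply, ContinuousLinearMap.flip_apply]
  exact add_comm _ _

theorem IsClosedOneForm.pullbackOneForm {ω : E → E →L[ℝ] G} {H : F → E}
    (hclosed : IsClosedOneForm ω) (hω : Differentiable ℝ ω) (hH : ContDiff ℝ 2 H) :
    IsClosedOneForm (pullbackOneForm ω H) := by
  intro p v w
  have hH1 : DifferentiableAt ℝ H p := hH.differentiable two_ne_zero p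
  have hH2 : DifferentiableAt ℝ (fderiv ℝ H) p :=
    (hH.fderiv_right le_rfl).differentiable one_ne_zero p
  rw [fderiv_pullbackOneForm_apply (hω _) hH1 hH2, fderiv_pullbackOneForm_apply (hω _) hH1 hH2,
    hclosed, (hH.contDiffAt.isSymmSndFDerivAt (by simp)).eq v w]

end Pullback

section Plane

variable {G : Type*} [NormedAddCommGroup G] [NormedSpace ℝ G]

theorem DifferentiableAt.hasDerivAt_comp_prodMk_const {f : ℝ × ℝ → G} {s t : ℝ}
    (hf : DifferentiableAt ℝ f (s, t)) :
    HasDerivAt (fun x => f (x, t)) (fderiv ℝ f (s, t) (1, 0)) s :=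
  hf.hasFDerivAt.comp_hasDerivAt s ((hasDerivAt_id s).prodMk (hasDerivAt_const s t))

theorem DifferentiableAt.hasDerivAt_comp_const_prodMk {f : ℝ × ℝ → G} {s t : ℝ}
    (hf : DifferentiableAt ℝ f (s, t)) :
    HasDerivAt (fun y => f (s, y)) (fderiv ℝ f (s, t) (0, 1)) t :=
  hf.hasFDerivAt.comp_hasDerivAt t ((hasDerivAt_const t s).prodMk (hasDerivAt_id t))

theorem fderiv_apply_one_zero_eq_zero_of_forall_eq {f : ℝ × ℝ → G} {t : ℝ} {y : G}
    (hf : ∀ x, f (x, t) = y) (s : ℝ) : fderiv ℝ f (s, t) (1, 0) = 0 := by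
  by_cases hdiff : DifferentiableAt ℝ f (s, t)
  · have hconst : (fun x => f (x, t)) = fun _ => y := funext hf
    exact hdiff.hasDerivAt_comp_prodMk_const.unique (hconst ▸ hasDerivAt_const s y)
  · rw [fderiv_zero_of_not_differentiableAt hdiff, zero_apply]

theorem hasDerivAt_intervalIntegral_of_contDiff {f : ℝ × ℝ → G} (hf : ContDiff ℝ 1 f)
    (a b s : ℝ) :
    HasDerivAt (fun x => ∫ t in a..b, f (x, t)) (∫ t in a..b, fderiv ℝ f (s, t) (1, 0)) s := by
  have hf' : Continuous fun p => fderiv ℝ f p (1, 0) :=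
    (hf.continuous_fderiv one_ne_zero).clm_apply continuous_const
  have hslice : ∀ {g : ℝ × ℝ → G} (x : ℝ), Continuous g → Continuous fun t => g (x, t) :=
    fun x hg => hg.comp (continuous_const.prodMk continuous_id)
  obtain ⟨C, hC⟩ := ((isCompact_closedBall s 1).prod
    (isCompact_uIcc (a := a) (b := b))).exists_bound_of_continuousOn hf'.continuousOn
  refine (intervalIntegral.hasDerivAt_integral_of_dominated_loc_of_deriv_le (bound := fun _ => C)
    (Metric.ball_mem_nhds s one_pos)
    (.of_forall fun x => (hslice x hf.continuous).aestronglyMeasurable)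
    ((hslice s hf.continuous).intervalIntegrable a b) (hslice s hf').aestronglyMeasurable
    (.of_forall fun t ht x hx =>
      hC (x, t) ⟨Metric.ball_subset_closedBall hx, Set.uIoc_subset_uIcc ht⟩)
    intervalIntegrable_const
    (.of_forall fun t _ x _ =>
      (hf.differentiable one_ne_zero (x, t)).hasDerivAt_comp_prodMk_const)).2

theorem IsClosedOneForm.hasDerivAt_intervalIntegral [CompleteSpace G]
    {α : ℝ × ℝ → ℝ × ℝ →L[ℝ] G} (hclosed : IsClosedOneForm α) (hα : ContDiff ℝ 1 α)
    (a b s : ℝ) :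
    HasDerivAt (fun x => ∫ t in a..b, α (x, t) (0, 1)) (α (s, b) (1, 0) - α (s, a) (1, 0)) s := by
  have happly : ∀ v, ContDiff ℝ 1 fun p => α p v := fun v => hα.clm_apply contDiff_const
  have hswap : ∀ p,
      fderiv ℝ (fun q => α q (0, 1)) p (1, 0) = fderiv ℝ (fun q => α q (1, 0)) p (0, 1) := by
    intro p
    have hαd := hα.differentiable one_ne_zero p
    rw [fderiv_clm_apply hαd (differentiableAt_const _),
      fderiv_clm_apply hαd (differentiableAt_const _)]
    simp [hclosed p]
  have hcont : Continuous fun p => fderiv ℝ (fun q => α q (1, 0)) p (0, 1) :=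
    ((happly _).continuous_fderiv one_ne_zero).clm_apply continuous_const
  have hftc : ∫ t in a..b, fderiv ℝ (fun q => α q (1, 0)) (s, t) (0, 1)
      = α (s, b) (1, 0) - α (s, a) (1, 0) :=
    intervalIntegral.integral_eq_sub_of_hasDerivAt
      (fun t _ => ((happly _).differentiable one_ne_zero (s, t)).hasDerivAt_comp_const_prodMk)
      ((hcont.comp (continuous_const.prodMk continuous_id)).intervalIntegrable a b)
  simpa only [hswap, hftc] using hasDerivAt_intervalIntegral_of_contDiff (happly (0, 1)) a b s

end Plane

theorem integral_of_closed_one_form_independent_of_path_general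
    (E : Type*) [NormedAddCommGroup E] [NormedSpace ℝ E]
    (ω : E → (E →L[ℝ] ℝ)) (hω : ContDiff ℝ 1 ω)
    (hclosed : ∀ x v w : E, (fderiv ℝ ω x v) w = (fderiv ℝ ω x w) v)
    (H : ℝ × ℝ → E) (hH : ContDiff ℝ 2 H)
    (x₀ x₁ : E) (hfix₀ : ∀ s : ℝ, H (s, 0) = x₀) (hfix₁ : ∀ s : ℝ, H (s, 1) = x₁)
    (s s' : ℝ) :
    (∫ t in (0:ℝ)..1, ω (H (s, t)) (fderiv ℝ H (s, t) (0, 1)))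
      = ∫ t in (0:ℝ)..1, ω (H (s', t)) (fderiv ℝ H (s', t) (0, 1)) := by
  have hpullback_closed : IsClosedOneForm (pullbackOneForm ω H) :=
    IsClosedOneForm.pullbackOneForm hclosed (hω.differentiable one_ne_zero) hH
  have hderiv : ∀ σ : ℝ,
      HasDerivAt (fun x => ∫ t in (0:ℝ)..1, pullbackOneForm ω H (x, t) (0, 1)) 0 σ := by
    intro σ
    simpa only [pullbackOneForm, ContinuousLinearMap.comp_apply, map_zero, sub_zero,
      fderiv_apply_one_zero_eq_zero_of_forall_eq hfix₀,
      fderiv_apply_one_zero_eq_zero_of_forall_eq hfix₁] using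
      hpullback_closed.hasDerivAt_intervalIntegral (hω.pullbackOneForm hH) 0 1 σ
  exact is_const_of_deriv_eq_zero (fun x => (hderiv x).differentiableAt)
    (fun x => (hderiv x).deriv) s s'

/-- **Independence of the interpolating family.**  The integral of a closed
`C¹` 1-form along an interpolating path from `x₀` to `x₁` is unchanged under
smooth deformations of the path with fixed ends. -/
theorem integral_of_closed_one_form_independent_of_path
    (E : Type*) [NormedAddCommGroup E] [NormedSpace ℝ E] [CompleteSpace E]
    (ω : E → (E →L[ℝ] ℝ)) (hω : ContDiff ℝ 1 ω)
    (hclosed : ∀ x v w : E, (fderiv ℝ ω x v) w = (fderiv ℝ ω x w) v)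
    (H : ℝ × ℝ → E) (hH : ContDiff ℝ 2 H)
    (x₀ x₁ : E) (hfix₀ : ∀ s : ℝ, H (s, 0) = x₀) (hfix₁ : ∀ s : ℝ, H (s, 1) = x₁)
    (s s' : ℝ) :
    (∫ t in (0:ℝ)..1, ω (H (s, t)) (fderiv ℝ H (s, t) (0, 1)))
      = ∫ t in (0:ℝ)..1, ω (H (s', t)) (fderiv ℝ H (s', t) (0, 1)) :=
  integral_of_closed_one_form_independent_of_path_general E ω hω hclosed H hH x₀ x₁ hfix₀ hfix₁ s s'
end
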